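/- Let f and D be natural numbers, Q a finite set with |Q| = 2f + 1, and B ⊆ Q with |B| ≤ f. Then the number of D-element subsets of Q that are contained in B, multiplied by 2^D, is at most the total number of D-element subsets of Q; equivalently, |{S ∈ powersetCard D Q : S ⊆ B}| · 2^D ≤ |powersetCard D Q|. -/

import Mathlib

/-!
A `D`-subset of `Q` lying in `B` is a `D`-subset of `B`, so there are at most `C(f, D)` of them,
while `Q` has `C(2f + 1, D) ≥ C(2f, D)` subsets of size `D`. Comparing falling factorials term by
term, `k (n - i) ≤ k n - i`, gives `k ^ D * C(n, D) ≤ C(k n, D)`; take `k = 2`.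
-/

namespace Nat

theorem pow_mul_descFactorial_le_descFactorial_mul (k n D : ℕ) :
    k ^ D * n.descFactorial D ≤ (k * n).descFactorial D := by
  induction D with
  | zero => simp
  | succ D ih =>
    rw [descFactorial_succ, descFactorial_succ, pow_succ]
    calc k ^ D * k * ((n - D) * n.descFactorial D)
        = k * (n - D) * (k ^ D * n.descFactorial D) := by ring
      _ ≤ (k * n - D) * (k * n).descFactorial D := by
        gcongr
        rcases k.eq_zero_or_pos with rfl | hk
        · simp
        · rw [Nat.mul_sub]
          exact Nat.sub_le_sub_left (Nat.le_mul_of_pos_left D hk) _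

theorem pow_mul_choose_le_choose_mul (k n D : ℕ) :
    k ^ D * n.choose D ≤ (k * n).choose D := by
  have h := pow_mul_descFactorial_le_descFactorial_mul k n D
  rw [descFactorial_eq_factorial_mul_choose, descFactorial_eq_factorial_mul_choose,
    mul_left_comm] at h
  exact Nat.le_of_mul_le_mul_left h D.factorial_pos

end Nat

theorem Finset.card_filter_subset_powersetCard_le {α : Type*} [DecidableEq α] (s t : Finset α) (D : ℕ) :
    ((s.powersetCard D).filter (· ⊆ t)).card ≤ t.card.choose D := by
  rw [← card_powersetCard]
  refine card_le_card fun u hu => ?_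
  simp only [mem_filter, mem_powersetCard] at hu ⊢
  exact ⟨hu.2, hu.1.2⟩

theorem bad_samples_fraction_general {α : Type*} [DecidableEq α] (f D : ℕ)
    (Q B : Finset α) (hQ : Q.card = 2 * f + 1) (hB : B.card ≤ f) :
    ((Q.powersetCard D).filter (fun S => S ⊆ B)).card * 2 ^ D ≤
      (Q.powersetCard D).card := by
  calc ((Q.powersetCard D).filter (fun S => S ⊆ B)).card * 2 ^ D
      ≤ f.choose D * 2 ^ D := by
        gcongr
        exact (Q.card_filter_subset_powersetCard_le B D).trans (Nat.choose_le_choose D hB)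
    _ ≤ (2 * f).choose D := by rw [mul_comm]; exact Nat.pow_mul_choose_le_choose_mul 2 f D
    _ ≤ (Q.powersetCard D).card := by
        rw [Finset.card_powersetCard, hQ]
        exact Nat.choose_le_succ _ _

theorem bad_samples_fraction {α : Type*} [DecidableEq α] (f D : ℕ)
    (Q B : Finset α) (hQ : Q.card = 2 * f + 1) (hBQ : B ⊆ Q) (hB : B.card ≤ f) :
    ((Q.powersetCard D).filter (fun S => S ⊆ B)).card * 2 ^ D ≤
      (Q.powersetCard D).card :=
  bad_samples_fraction_general f D Q B hQ hB
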